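/- arXiv:2303.14149 — 2 statements merged into one kernel-verified Lean document; each statement's English description precedes it below -/
import Mathlib

section
/- Let Ω ⊂ R^n be a strictly tessellating polytope and σ ∈ R_Ω^{nb} a neighbouring reflection with associated metric projection π_σ onto the affine subspace fixed by σ, and complementary projection π_σ^⊥ = id − π_σ. Then there exists a constant c > 0 such that for all r, r' ∈ Ω: |r − σ r'| ≥ c(|π_σ r − π_σ r'| + |π_σ^⊥ r + π_σ^⊥ r'|), and in particular |r − σ r'| ≥ c|r − r'|. -/
open MeasureTheory Metric Set
open scoped RealInnerProductSpace

noncomputable section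

abbrev Euc (n : ℕ) := EuclideanSpace ℝ (Fin n)

/-- `σ` is the (affine isometric) reflection across the hyperplane `{r | ⟪r, v⟫ = α}`
with unit normal `v`. -/
def IsHyperplaneReflection {n : ℕ} (v : Euc n) (α : ℝ) (σ : Euc n ≃ᵃⁱ[ℝ] Euc n) : Prop :=
  ‖v‖ = 1 ∧ ∀ r, σ r = r - (2 * (⟪r, v⟫ - α)) • v

/-!
The open polytope `Ω` is a Dirichlet domain for `G`: for `x, q ∈ Ω`, no orbit point `τ q` is
closer to `x` than `q`. Strict tessellation makes the orbit of `q` uniformly separated, so a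
nearest orbit point `τ₀ q` exists; if `τ₀⁻¹ x` violated a face inequality, reflecting in that face
would give a nearer orbit point, so `x ∈ closure (τ₀ Ω)`, which meets `Ω` and forces `τ₀ = 1`.

Write `σ x = Λ (x - π x) + π x` with `Λ` the linear part of `σ`, and `u = r - π r`,
`u' = r' - π r'`. By Pythagoras `‖r - σ r'‖² = ‖π r - π r'‖² + ‖u - Λ u'‖²`, and the Dirichlet
property becomes `‖u - u'‖ ≤ ‖u - Λ u'‖`. A vector fixed by `Λ` lies in the direction of the fixed
set of `σ`, to which `u, u'` are orthogonal, so `‖Λ w - w‖ ≥ κ ‖w‖` for `w = u, u'`; the triangle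
inequality then gives `κ (‖u‖ + ‖u'‖) ≤ 4 ‖u - Λ u'‖`.
-/

section Polyhedron

variable {E ι : Type*} [NormedAddCommGroup E] [InnerProductSpace ℝ E]

def openPolyhedron (v : ι → E) (α : ι → ℝ) : Set E := {r | ∀ j, α j < ⟪r, v j⟫}

theorem isOpen_openPolyhedron [Finite ι] (v : ι → E) (α : ι → ℝ) :
    IsOpen (openPolyhedron v α) := by
  simp only [openPolyhedron, ofPred_forall]
  exact isOpen_iInter_of_finite fun j ↦
    isOpen_lt continuous_const (continuous_id.inner continuous_const)

theorem mem_closure_openPolyhedron {v : ι → E} {α : ι → ℝ} {q y : E}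
    (hq : q ∈ openPolyhedron v α) (hy : ∀ j, α j ≤ ⟪y, v j⟫) :
    y ∈ closure (openPolyhedron v α) := by
  have hseg : openSegment ℝ y q ⊆ openPolyhedron v α := by
    rintro _ ⟨a, b, ha, hb, hab, rfl⟩ j
    rw [inner_add_left, real_inner_smul_left, real_inner_smul_left]
    have hα : α j = a * α j + b * α j := by rw [← add_mul, hab, one_mul]
    linarith [mul_le_mul_of_nonneg_left (hy j) ha.le, mul_lt_mul_of_pos_left (hq j) hb]
  exact closure_mono hseg (segment_subset_closure_openSegment (left_mem_segment ℝ y q))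

end Polyhedron

theorem IsHyperplaneReflection.dist_lt {n : ℕ} {v : Euc n} {α : ℝ} {σ : Euc n ≃ᵃⁱ[ℝ] Euc n}
    (hσ : IsHyperplaneReflection v α σ) {z q : Euc n} (hz : ⟪z, v⟫ < α) (hq : α < ⟪q, v⟫) :
    dist z (σ q) < dist z q := by
  set t := 2 * (⟪q, v⟫ - α)
  have hsplit : z - σ q = (z - q) + t • v := by rw [hσ.2 q]; abel
  have hv : ‖t • v‖ ^ 2 = t ^ 2 := by rw [norm_smul, hσ.1, mul_one, Real.norm_eq_abs, sq_abs]
  rw [dist_eq_norm, dist_eq_norm, ← sq_lt_sq₀ (norm_nonneg _) (norm_nonneg _), hsplit,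
    norm_add_sq_real, hv, real_inner_smul_right, inner_sub_left]
  nlinarith [mul_pos (sub_pos.mpr hq) (sub_pos.mpr hz)]

theorem IsCompact.finite_of_pairwise_le_dist {X : Type*} [MetricSpace X] {K s : Set X}
    (hK : IsCompact K) (hsK : s ⊆ K) {ε : ℝ} (hε : 0 < ε)
    (hs : s.Pairwise fun x y ↦ ε ≤ dist x y) : s.Finite := by
  by_contra hinf
  obtain ⟨z, -, hz⟩ := Set.Infinite.exists_accPt_of_subset_isCompact hinf hK hsK
  rw [accPt_iff_nhds] at hz
  obtain ⟨y, ⟨hyz, hys⟩, hyne⟩ := hz _ (ball_mem_nhds z (half_pos hε))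
  obtain ⟨y', ⟨hy'z, hy's⟩, -⟩ := hz _ (ball_mem_nhds z (dist_pos.2 hyne))
  rw [mem_ball] at hyz hy'z
  have hyy' : y ≠ y' := by rintro rfl; exact lt_irrefl _ hy'z
  linarith [hs hys hy's hyy', dist_triangle_right y y' z]

theorem exists_pairwise_le_dist_orbit {E : Type*} [NormedAddCommGroup E] [NormedSpace ℝ E]
    {Ω : Set E} (hΩ : IsOpen Ω) {G : Set (E ≃ᵃⁱ[ℝ] E)}
    (hst : ∀ σ ∈ G, ∀ τ ∈ G, ((⇑σ '' Ω) ∩ (⇑τ '' Ω)).Nonempty → σ = τ) {q : E} (hq : q ∈ Ω) :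
    ∃ ε > 0, ((fun τ : E ≃ᵃⁱ[ℝ] E ↦ τ q) '' G).Pairwise fun p p' ↦ ε ≤ dist p p' := by
  obtain ⟨ε, hε, hball⟩ := Metric.isOpen_iff.mp hΩ q hq
  refine ⟨ε, hε, ?_⟩
  rintro _ ⟨τ, hτ, rfl⟩ _ ⟨τ', hτ', rfl⟩ hne
  by_contra! hlt
  have hmem : τ' q ∈ ⇑τ '' Ω := by
    refine ⟨τ.symm (τ' q), hball ?_, τ.apply_symm_apply _⟩
    rwa [mem_ball, ← τ.dist_map, τ.apply_symm_apply, dist_comm]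
  exact hne (by rw [hst τ hτ τ' hτ' ⟨_, hmem, mem_image_of_mem _ hq⟩])

theorem dist_le_dist_apply_of_strict_tessellation {n : ℕ} {ι : Type*} [Finite ι]
    {v : ι → Euc n} {α : ι → ℝ} {σf : ι → (Euc n ≃ᵃⁱ[ℝ] Euc n)}
    (hσf : ∀ j, IsHyperplaneReflection (v j) (α j) (σf j))
    {G : Subgroup (Euc n ≃ᵃⁱ[ℝ] Euc n)} (hσfG : ∀ j, σf j ∈ G)
    (hst : ∀ σ ∈ G, ∀ τ ∈ G,
      ((⇑σ '' openPolyhedron v α) ∩ (⇑τ '' openPolyhedron v α)).Nonempty → σ = τ)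
    {x q : Euc n} (hx : x ∈ openPolyhedron v α) (hq : q ∈ openPolyhedron v α)
    {τ : Euc n ≃ᵃⁱ[ℝ] Euc n} (hτ : τ ∈ G) :
    dist x q ≤ dist x (τ q) := by
  have hopen := isOpen_openPolyhedron v α
  obtain ⟨ε, hε, hsep⟩ := exists_pairwise_le_dist_orbit hopen hst hq
  set T := ((fun τ : Euc n ≃ᵃⁱ[ℝ] Euc n ↦ τ q) '' G) ∩ closedBall x (dist x q)
  have hT : T.Finite := (isCompact_closedBall x _).finite_of_pairwise_le_dist
    inter_subset_right hε (hsep.mono inter_subset_left)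
  obtain ⟨_, ⟨⟨τ₀, hτ₀, rfl⟩, hτ₀x⟩, hmin⟩ :=
    T.exists_min_image (dist x) hT ⟨q, ⟨1, G.one_mem, rfl⟩, mem_closedBall'.2 le_rfl⟩
  have hτ₀min : ∀ τ ∈ G, dist x (τ₀ q) ≤ dist x (τ q) := by
    intro τ hτ
    by_cases h : dist x (τ q) ≤ dist x q
    · exact hmin _ ⟨⟨τ, hτ, rfl⟩, mem_closedBall'.2 h⟩
    · exact (mem_closedBall'.1 hτ₀x).trans (not_le.1 h).le
  have hdist : ∀ p, dist x (τ₀ p) = dist (τ₀.symm x) p := fun p ↦ by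
    rw [← τ₀.dist_map (τ₀.symm x), τ₀.apply_symm_apply]
  -- reflecting in a face that separates `τ₀⁻¹ x` from `q` would bring the orbit point closer
  have hface : ∀ j, α j ≤ ⟪τ₀.symm x, v j⟫ := by
    intro j
    by_contra! hlt
    have hcloser := (hσf j).dist_lt hlt (hq j)
    have := hτ₀min _ (G.mul_mem hτ₀ (hσfG j))
    rw [AffineIsometryEquiv.coe_mul, Function.comp_apply, hdist, hdist] at this
    exact this.not_gt hcloser
  have hxcl : x ∈ closure (⇑τ₀ '' openPolyhedron v α) := image_closure_subset_closure_image
    τ₀.continuous ⟨_, mem_closure_openPolyhedron hq hface, τ₀.apply_symm_apply x⟩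
  have hτ₀one : 1 = τ₀ := hst 1 G.one_mem τ₀ hτ₀ <| by
    simpa [AffineIsometryEquiv.coe_one] using mem_closure_iff.1 hxcl _ hopen hx
  calc dist x q = dist x (τ₀ q) := by rw [← hτ₀one]; rfl
    _ ≤ dist x (τ q) := hτ₀min τ hτ

theorem LinearMap.exists_pos_mul_norm_le_norm_apply_of_mem_orthogonal_ker {𝕜 E F : Type*}
    [RCLike 𝕜] [NormedAddCommGroup E] [InnerProductSpace 𝕜 E] [FiniteDimensional 𝕜 E]
    [NormedAddCommGroup F] [NormedSpace 𝕜 F] (f : E →ₗ[𝕜] F) :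
    ∃ κ > 0, ∀ w ∈ (LinearMap.ker f)ᗮ, κ * ‖w‖ ≤ ‖f w‖ := by
  set W := (LinearMap.ker f)ᗮ
  have hker : LinearMap.ker (f ∘ₗ W.subtype) = ⊥ := by
    rw [LinearMap.ker_eq_bot']
    intro w hw
    have hw' : (w : E) ∈ LinearMap.ker f ⊓ W := ⟨hw, w.2⟩
    rw [Submodule.inf_orthogonal_eq_bot, Submodule.mem_bot] at hw'
    exact Subtype.ext hw'
  obtain ⟨K, hK, hanti⟩ := (f ∘ₗ W.subtype).exists_antilipschitzWith hker
  refine ⟨K⁻¹, by positivity, fun w hw ↦ ?_⟩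
  have := hanti.le_mul_dist ⟨w, hw⟩ 0
  simp only [dist_zero_right, map_zero] at this
  rw [inv_mul_le_iff₀ (by positivity)]
  simpa using this

theorem LinearIsometry.mul_norm_add_norm_le_four_mul {E : Type*} [SeminormedAddCommGroup E]
    [NormedSpace ℝ E] (Λ : E →ₗᵢ[ℝ] E) {κ : ℝ} {u u' : E}
    (hu : κ * ‖u‖ ≤ ‖Λ u - u‖) (hu' : κ * ‖u'‖ ≤ ‖Λ u' - u'‖) (h : ‖u - u'‖ ≤ ‖u - Λ u'‖) :
    κ * (‖u‖ + ‖u'‖) ≤ 4 * ‖u - Λ u'‖ := by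
  have hΛ : ‖Λ u - Λ u'‖ = ‖u - u'‖ := by rw [← map_sub, Λ.norm_map]
  have h₁ := norm_sub_le_norm_sub_add_norm_sub (Λ u) (Λ u') u
  have h₂ := norm_sub_le_norm_sub_add_norm_sub (Λ u') u u'
  rw [norm_sub_rev (Λ u') u] at h₁ h₂
  linarith

section FixedPointProjection

variable {E : Type*} [NormedAddCommGroup E] [InnerProductSpace ℝ E]

theorem AffineIsometryEquiv.apply_eq_linearIsometryEquiv_sub_add (σ : E ≃ᵃⁱ[ℝ] E) {p : E}
    (hp : σ p = p) (x : E) : σ x = σ.linearIsometryEquiv (x - p) + p := by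
  simpa [hp] using σ.map_vadd p (x - p)

def IsFixedPointProjection (σ : E ≃ᵃⁱ[ℝ] E) (π : E → E) : Prop :=
  ∀ r, σ (π r) = π r ∧ ∀ a, σ a = a → ∀ b, σ b = b → ⟪r - π r, a - b⟫ = 0

namespace IsFixedPointProjection

variable {σ : E ≃ᵃⁱ[ℝ] E} {π : E → E}

theorem inner_sub_eq_zero (hπ : IsFixedPointProjection σ π) (x q r : E) :
    ⟪π x - π q, r - π r⟫ = 0 := by
  rw [real_inner_comm]
  exact (hπ r).2 _ (hπ x).1 _ (hπ q).1

theorem inner_linearIsometryEquiv_sub_eq_zero (hπ : IsFixedPointProjection σ π) (x q r : E) :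
    ⟪π x - π q, σ.linearIsometryEquiv (r - π r)⟫ = 0 := by
  have hfix : σ.linearIsometryEquiv (π x - π q) = π x - π q := by
    have := σ.apply_eq_linearIsometryEquiv_sub_add (hπ q).1 (π x)
    rw [(hπ x).1] at this
    exact eq_sub_of_add_eq this.symm
  rw [← hfix, LinearIsometryEquiv.inner_map_map]
  exact hπ.inner_sub_eq_zero x q r

theorem norm_sub_apply_sq (hπ : IsFixedPointProjection σ π) (x q : E) :
    ‖x - σ q‖ ^ 2 = ‖π x - π q‖ ^ 2 + ‖(x - π x) - σ.linearIsometryEquiv (q - π q)‖ ^ 2 := by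
  have hsplit : x - σ q = (π x - π q) + ((x - π x) - σ.linearIsometryEquiv (q - π q)) := by
    rw [σ.apply_eq_linearIsometryEquiv_sub_add (hπ q).1 q]; abel
  rw [hsplit, sq, sq, sq, norm_add_sq_eq_norm_sq_add_norm_sq_real]
  rw [inner_sub_right, hπ.inner_sub_eq_zero, hπ.inner_linearIsometryEquiv_sub_eq_zero, sub_zero]

theorem norm_sub_sq (hπ : IsFixedPointProjection σ π) (x q : E) :
    ‖x - q‖ ^ 2 = ‖π x - π q‖ ^ 2 + ‖(x - π x) - (q - π q)‖ ^ 2 := by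
  have hsplit : x - q = (π x - π q) + ((x - π x) - (q - π q)) := by abel
  rw [hsplit, sq, sq, sq, norm_add_sq_eq_norm_sq_add_norm_sq_real]
  rw [inner_sub_right, hπ.inner_sub_eq_zero, hπ.inner_sub_eq_zero, sub_zero]

theorem sub_mem_orthogonal_ker (hπ : IsFixedPointProjection σ π) (r : E) :
    r - π r ∈ (LinearMap.ker ((σ.linearIsometryEquiv : E →ₗ[ℝ] E) - LinearMap.id))ᗮ := by
  rw [Submodule.mem_orthogonal']
  intro k hk
  have hΛk : σ.linearIsometryEquiv k = k := sub_eq_zero.1 hk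
  have hfix : σ (k + π r) = k + π r := by
    rw [σ.apply_eq_linearIsometryEquiv_sub_add (hπ r).1, add_sub_cancel_right, hΛk]
  simpa using (hπ r).2 _ hfix _ (hπ r).1

theorem exists_reflected_distance_lower_bound [FiniteDimensional ℝ E]
    (hπ : IsFixedPointProjection σ π) {Ω : Set E}
    (hD : ∀ r ∈ Ω, ∀ r' ∈ Ω, dist r r' ≤ dist r (σ r')) :
    ∃ c > 0, ∀ r ∈ Ω, ∀ r' ∈ Ω,
      c * (‖π r - π r'‖ + ‖(r - π r) + (r' - π r')‖) ≤ ‖r - σ r'‖ ∧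
      c * ‖r - r'‖ ≤ ‖r - σ r'‖ := by
  set Λ := σ.linearIsometryEquiv
  obtain ⟨κ, hκ, hκW⟩ :=
    ((Λ : E →ₗ[ℝ] E) - LinearMap.id).exists_pos_mul_norm_le_norm_apply_of_mem_orthogonal_ker
  refine ⟨min (1 / 2) (κ / 8), by positivity, fun r hr r' hr' ↦ ?_⟩
  have hc_half := min_le_left (1 / 2) (κ / 8)
  have hc_κ := min_le_right (1 / 2) (κ / 8)
  have hpyth := hπ.norm_sub_apply_sq r r'
  have hπle : ‖π r - π r'‖ ≤ ‖r - σ r'‖ := by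
    nlinarith [norm_nonneg (π r - π r'), norm_nonneg (r - σ r'),
      sq_nonneg ‖(r - π r) - Λ (r' - π r')‖]
  have hule : ‖(r - π r) - Λ (r' - π r')‖ ≤ ‖r - σ r'‖ := by
    nlinarith [norm_nonneg ((r - π r) - Λ (r' - π r')), norm_nonneg (r - σ r'),
      sq_nonneg ‖π r - π r'‖]
  have hDr : ‖r - r'‖ ≤ ‖r - σ r'‖ := by simpa only [dist_eq_norm] using hD r hr r' hr'
  have hDu : ‖(r - π r) - (r' - π r')‖ ≤ ‖(r - π r) - Λ (r' - π r')‖ := by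
    rw [← sq_le_sq₀ (norm_nonneg _) (norm_nonneg _)]
    have := pow_le_pow_left₀ (norm_nonneg _) hDr 2
    rw [hpyth, hπ.norm_sub_sq] at this
    linarith
  have hκu : κ * (‖r - π r‖ + ‖r' - π r'‖) ≤ 4 * ‖(r - π r) - Λ (r' - π r')‖ :=
    Λ.toLinearIsometry.mul_norm_add_norm_le_four_mul
      (hκW _ (hπ.sub_mem_orthogonal_ker r)) (hκW _ (hπ.sub_mem_orthogonal_ker r')) hDu
  have hadd := norm_add_le (r - π r) (r' - π r')
  constructor
  · nlinarith [mul_le_mul_of_nonneg_right hc_half (norm_nonneg (π r - π r')),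
      mul_le_mul_of_nonneg_right hc_κ (norm_nonneg (r - π r + (r' - π r'))),
      mul_le_mul_of_nonneg_left hadd hκ.le]
  · calc min (1 / 2) (κ / 8) * ‖r - r'‖ ≤ ‖r - r'‖ :=
          mul_le_of_le_one_left (norm_nonneg _) (by linarith)
      _ ≤ ‖r - σ r'‖ := hDr

end IsFixedPointProjection

end FixedPointProjection

theorem reflected_distance_lower_bound_general (n m : ℕ) (v : Fin m → Euc n) (α : Fin m → ℝ)
    (Ω : Set (Euc n))
    (hΩ : Ω = {r | ∀ j, α j < ⟪r, v j⟫})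
    (σf : Fin m → (Euc n ≃ᵃⁱ[ℝ] Euc n))
    (hσf : ∀ j, IsHyperplaneReflection (v j) (α j) (σf j))
    (G : Subgroup (Euc n ≃ᵃⁱ[ℝ] Euc n)) (hG : G = Subgroup.closure (Set.range σf))
    -- strict tessellation
    (hst : ∀ σ ∈ G, ∀ τ ∈ G, ((⇑σ '' Ω) ∩ (⇑τ '' Ω)).Nonempty → σ = τ)
    (σ : Euc n ≃ᵃⁱ[ℝ] Euc n) (hσ : σ ∈ G)
    -- A: affine subspace of fixed points of σ (extending closure Ω ∩ closure σ(Ω));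
    -- π: the metric (orthogonal) projection onto A, π^⊥ = id − π
    (A : Set (Euc n)) (hA : A = {x | σ x = x})
    (π : Euc n → Euc n)
    (hπ : ∀ r, π r ∈ A ∧ ∀ a ∈ A, ∀ b ∈ A, ⟪r - π r, a - b⟫ = 0) :
    ∃ c > 0, ∀ r ∈ Ω, ∀ r' ∈ Ω,
      c * (‖π r - π r'‖ + ‖(r - π r) + (r' - π r')‖) ≤ ‖r - σ r'‖ ∧
      c * ‖r - r'‖ ≤ ‖r - σ r'‖ := by
  subst hΩ hA
  have hσfG : ∀ j, σf j ∈ G := fun j ↦ hG ▸ Subgroup.subset_closure ⟨j, rfl⟩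
  exact IsFixedPointProjection.exists_reflected_distance_lower_bound hπ fun r hr r' hr' ↦
    dist_le_dist_apply_of_strict_tessellation hσf hσfG hst hr hr' hσ

/-- lower bound on reflected distances: for a neighbouring reflection
`σ ∈ R_Ω^{nb}` with metric projection `π_σ` onto the affine subspace fixed by `σ`,
`|r − σ r'| ≳ |π_σ r − π_σ r'| + |π_σ^⊥ r + π_σ^⊥ r'| ≳ |r − r'|` on `Ω`. -/
theorem reflected_distance_lower_bound (n m : ℕ) (v : Fin m → Euc n) (α : Fin m → ℝ)
    (Ω : Set (Euc n))
    (hΩ : Ω = {r | ∀ j, α j < ⟪r, v j⟫})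
    (hne : Ω.Nonempty) (hbd : Bornology.IsBounded Ω)
    (σf : Fin m → (Euc n ≃ᵃⁱ[ℝ] Euc n))
    (hσf : ∀ j, IsHyperplaneReflection (v j) (α j) (σf j))
    (G : Subgroup (Euc n ≃ᵃⁱ[ℝ] Euc n)) (hG : G = Subgroup.closure (Set.range σf))
    -- strict tessellation
    (hst : ∀ σ ∈ G, ∀ τ ∈ G, ((⇑σ '' Ω) ∩ (⇑τ '' Ω)).Nonempty → σ = τ)
    -- σ is a neighbouring reflection: the closures of σ(Ω) and Ω intersect
    (σ : Euc n ≃ᵃⁱ[ℝ] Euc n) (hσ : σ ∈ G)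
    (hnb : (closure (⇑σ '' Ω) ∩ closure Ω).Nonempty)
    -- A: affine subspace of fixed points of σ (extending closure Ω ∩ closure σ(Ω));
    -- π: the metric (orthogonal) projection onto A, π^⊥ = id − π
    (A : Set (Euc n)) (hA : A = {x | σ x = x}) (hAne : A.Nonempty)
    (π : Euc n → Euc n)
    (hπ : ∀ r, π r ∈ A ∧ ∀ a ∈ A, ∀ b ∈ A, ⟪r - π r, a - b⟫ = 0) :
    ∃ c > 0, ∀ r ∈ Ω, ∀ r' ∈ Ω,
      c * (‖π r - π r'‖ + ‖(r - π r) + (r' - π r')‖) ≤ ‖r - σ r'‖ ∧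
      c * ‖r - r'‖ ≤ ‖r - σ r'‖ :=
  reflected_distance_lower_bound_general n m v α Ω hΩ σf hσf G hG hst σ hσ A hA π hπ
end
end

section
/- Let Ω ⊂ R^n be an open polytope that strictly tessellates R^n, σ ∈ R_Ω, and let H be the hyperplane extending a boundary face of σ(Ω). Then H ∩ Ω = ∅. -/
open MeasureTheory Metric Set
open scoped RealInnerProductSpace

noncomputable section

/-! The conjugate `σ ρ σ⁻¹` of a reflection `ρ ∈ G` fixes every point of `σ(Fix ρ)`. If such a
point lay in `Ω`, then `σ ρ σ⁻¹ (Ω)` would meet `Ω`, so strict tessellation forces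
`σ ρ σ⁻¹ = 1`, i.e. `ρ = 1`; but a reflection is not the identity. -/

section StrictlyTessellates

variable {𝕜 V P : Type*} [NormedField 𝕜] [SeminormedAddCommGroup V] [NormedSpace 𝕜 V]
  [PseudoMetricSpace P] [NormedAddTorsor V P]

def StrictlyTessellates (G : Subgroup (P ≃ᵃⁱ[𝕜] P)) (Ω : Set P) : Prop :=
  ∀ σ ∈ G, ∀ τ ∈ G, ((⇑σ '' Ω) ∩ (⇑τ '' Ω)).Nonempty → σ = τ

variable {G : Subgroup (P ≃ᵃⁱ[𝕜] P)} {Ω : Set P}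

theorem StrictlyTessellates.eq_one_of_apply_eq_self (hG : StrictlyTessellates G Ω)
    {ρ : P ≃ᵃⁱ[𝕜] P} (hρ : ρ ∈ G) {x : P} (hx : x ∈ Ω) (hfix : ρ x = x) : ρ = 1 :=
  hG ρ hρ 1 G.one_mem ⟨x, ⟨x, hx, hfix⟩, ⟨x, hx, rfl⟩⟩

theorem StrictlyTessellates.image_fixedPoints_inter_eq_empty (hG : StrictlyTessellates G Ω)
    {ρ σ : P ≃ᵃⁱ[𝕜] P} (hρ : ρ ∈ G) (hρ1 : ρ ≠ 1) (hσ : σ ∈ G) :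
    ⇑σ '' Function.fixedPoints ρ ∩ Ω = ∅ := by
  rw [Set.eq_empty_iff_forall_notMem]
  rintro _ ⟨⟨y, hy, rfl⟩, hσy⟩
  have hconj_fix : (σ * ρ * σ⁻¹) (σ y) = σ y := by
    simp [AffineIsometryEquiv.coe_inv, hy.eq]
  have hconj : σ * ρ * σ⁻¹ = 1 :=
    hG.eq_one_of_apply_eq_self (G.mul_mem (G.mul_mem hσ hρ) (G.inv_mem hσ)) hσy hconj_fix
  exact hρ1 (mul_eq_left.mp (mul_inv_eq_one.mp hconj))

end StrictlyTessellates

namespace IsHyperplaneReflection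

variable {n : ℕ} {v : Euc n} {α : ℝ} {σ : Euc n ≃ᵃⁱ[ℝ] Euc n}

theorem apply_eq_self_iff (h : IsHyperplaneReflection v α σ) (r : Euc n) :
    σ r = r ↔ ⟪r, v⟫ = α := by
  have hv : v ≠ 0 := norm_ne_zero_iff.mp (h.1 ▸ one_ne_zero)
  rw [h.2 r, sub_eq_self, smul_eq_zero, or_iff_left hv, mul_eq_zero, sub_eq_zero,
    or_iff_right two_ne_zero]

theorem fixedPoints_eq (h : IsHyperplaneReflection v α σ) :
    Function.fixedPoints σ = {r | ⟪r, v⟫ = α} :=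
  Set.ext h.apply_eq_self_iff

theorem ne_one (h : IsHyperplaneReflection v α σ) : σ ≠ 1 := by
  intro hσ
  have hfix := (h.apply_eq_self_iff ((α - 1) • v)).mp (by rw [hσ]; rfl)
  rw [real_inner_smul_left, real_inner_self_eq_norm_sq, h.1] at hfix
  linarith

end IsHyperplaneReflection

theorem strictlyTessellating_hyperplane_disjoint_general (n m : ℕ) (v : Fin m → Euc n)
    (α : Fin m → ℝ) (Ω : Set (Euc n))
    (σf : Fin m → (Euc n ≃ᵃⁱ[ℝ] Euc n))
    (hσf : ∀ j, IsHyperplaneReflection (v j) (α j) (σf j))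
    (G : Subgroup (Euc n ≃ᵃⁱ[ℝ] Euc n)) (hG : G = Subgroup.closure (Set.range σf))
    (hst : ∀ σ ∈ G, ∀ τ ∈ G, ((⇑σ '' Ω) ∩ (⇑τ '' Ω)).Nonempty → σ = τ)
    (σ : Euc n ≃ᵃⁱ[ℝ] Euc n) (hσ : σ ∈ G) (ℓ : Fin m)
    -- H is the hyperplane extending the face σ(F_ℓ) of σ(Ω)
    (H : Set (Euc n)) (hH : H = ⇑σ '' {r | ⟪r, v ℓ⟫ = α ℓ}) :
    H ∩ Ω = ∅ := by
  have hst : StrictlyTessellates G Ω := hst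
  have hℓ : σf ℓ ∈ G := hG ▸ Subgroup.subset_closure ⟨ℓ, rfl⟩
  rw [hH, ← (hσf ℓ).fixedPoints_eq]
  exact hst.image_fixedPoints_inter_eq_empty hℓ (hσf ℓ).ne_one hσ

/-- if `Ω` strictly tessellates `ℝⁿ`, `σ ∈ R_Ω`, and `H` is the hyperplane
extending a boundary face of `σ(Ω)`, then `H ∩ Ω = ∅`. -/
theorem strictlyTessellating_hyperplane_disjoint (n m : ℕ) (v : Fin m → Euc n)
    (α : Fin m → ℝ) (Ω : Set (Euc n))
    (hΩ : Ω = {r | ∀ j, α j < ⟪r, v j⟫})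
    (hne : Ω.Nonempty) (hbd : Bornology.IsBounded Ω)
    (σf : Fin m → (Euc n ≃ᵃⁱ[ℝ] Euc n))
    (hσf : ∀ j, IsHyperplaneReflection (v j) (α j) (σf j))
    (G : Subgroup (Euc n ≃ᵃⁱ[ℝ] Euc n)) (hG : G = Subgroup.closure (Set.range σf))
    (hst : ∀ σ ∈ G, ∀ τ ∈ G, ((⇑σ '' Ω) ∩ (⇑τ '' Ω)).Nonempty → σ = τ)
    (σ : Euc n ≃ᵃⁱ[ℝ] Euc n) (hσ : σ ∈ G) (ℓ : Fin m)
    -- H is the hyperplane extending the face σ(F_ℓ) of σ(Ω)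
    (H : Set (Euc n)) (hH : H = ⇑σ '' {r | ⟪r, v ℓ⟫ = α ℓ}) :
    H ∩ Ω = ∅ :=
  strictlyTessellating_hyperplane_disjoint_general n m v α Ω σf hσf G hG hst σ hσ ℓ H hH
end
end
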